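/- arXiv:1209.4089 — 2 statements merged into one kernel-verified Lean document; each statement's English description precedes it below -/
import Mathlib

section
/- Let (w_1^{(n)},...,w_n^{(n)}) ~ Multinomial(m_n; 1/n,...,1/n) with m_n, n → ∞ and m_n = o(n²). Then (m_n/(1 − 1/n)) Σ_{i=1}^n (w_i^{(n)}/m_n − 1/n)² → 1 in probability. -/
open MeasureTheory ProbabilityTheory Filter Finset

noncomputable def zf (N i : ℕ) (y : ℕ) : ℝ := (if y = i then 1 else 0) - 1/N

section Aux2
variable {Ω : Type*} [MeasurableSpace Ω] {P : Measure Ω} [IsProbabilityMeasure P]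

lemma aux_integrable' {f : Ω → ℝ} (hm : Measurable f) {C : ℝ} (hb : ∀ ω, |f ω| ≤ C) :
    Integrable f P :=
  (integrable_const C).mono' hm.aestronglyMeasurable (ae_of_all _ (by simpa using hb))

lemma zf_abs_le {N : ℕ} (hN : 1 ≤ N) (i y : ℕ) : |zf N i y| ≤ 1 := by
  have h0 : (0:ℝ) ≤ 1/N := by positivity
  have h1 : (1:ℝ)/N ≤ 1 := by
    rw [div_le_one (by exact_mod_cast hN)]; exact_mod_cast hN
  unfold zf; split <;> rw [abs_le] <;> constructor <;> linarith

lemma meas_ind {Y : Ω → ℕ} (hY : Measurable Y) (i : ℕ) :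
    Measurable (fun ω => if Y ω = i then (1:ℝ) else 0) :=
  (measurable_from_nat (f := fun y => if y = i then (1:ℝ) else 0)).comp hY

lemma int_ind_abs {Y : Ω → ℕ} (i : ℕ) : ∀ ω, |if Y ω = i then (1:ℝ) else 0| ≤ 1 := by
  intro ω; split <;> simp

lemma ind_integrable {Y : Ω → ℕ} (hY : Measurable Y) (i : ℕ) :
    Integrable (fun ω => if Y ω = i then (1:ℝ) else 0) P :=
  aux_integrable' (meas_ind hY i) (int_ind_abs i)

lemma int_ind {N : ℕ} {Y : Ω → ℕ} (hY : Measurable Y)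
    (hYunif : ∀ i < N, P {ω | Y ω = i} = 1/N) {i : ℕ} (hi : i < N) :
    ∫ ω, (if Y ω = i then (1:ℝ) else 0) ∂P = 1/N := by
  have hms : MeasurableSet {ω | Y ω = i} := hY (measurableSet_singleton i)
  have heq : (fun ω => if Y ω = i then (1:ℝ) else 0)
      = Set.indicator {ω | Y ω = i} (fun _ => (1:ℝ)) := by
    funext ω; simp [Set.indicator_apply, Set.mem_setOf_eq]
  rw [heq, integral_indicator_const _ hms, measureReal_def, hYunif i hi]
  simp [ENNReal.toReal_div]

lemma int_comb {Y : Ω → ℕ} (hY : Measurable Y) (i j : ℕ) (a b c : ℝ) :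
    ∫ ω, (a * (if Y ω = i then (1:ℝ) else 0) + b * (if Y ω = j then (1:ℝ) else 0) + c) ∂P
      = a * (∫ ω, (if Y ω = i then (1:ℝ) else 0) ∂P)
        + b * (∫ ω, (if Y ω = j then (1:ℝ) else 0) ∂P) + c := by
  rw [integral_add (f := fun ω => a * (if Y ω = i then (1:ℝ) else 0)
        + b * (if Y ω = j then (1:ℝ) else 0)) (g := fun _ => c)
      (((ind_integrable hY i).const_mul a).add ((ind_integrable hY j).const_mul b))
      (integrable_const c),
    integral_add (f := fun ω => a * (if Y ω = i then (1:ℝ) else 0))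
      (g := fun ω => b * (if Y ω = j then (1:ℝ) else 0))
      ((ind_integrable hY i).const_mul a) ((ind_integrable hY j).const_mul b),
    integral_const_mul, integral_const_mul]
  simp

lemma int_zf {N : ℕ} {Y : Ω → ℕ} (hY : Measurable Y)
    (hYunif : ∀ i < N, P {ω | Y ω = i} = 1/N) {i : ℕ} (hi : i < N) :
    ∫ ω, zf N i (Y ω) ∂P = 0 := by
  unfold zf
  rw [integral_sub (ind_integrable hY i) (integrable_const _), int_ind hY hYunif hi]
  simp

lemma int_zf_mul {N : ℕ} {Y : Ω → ℕ} (hY : Measurable Y)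
    (hYunif : ∀ i < N, P {ω | Y ω = i} = 1/N) {i j : ℕ} (hi : i < N) (hj : j < N) :
    ∫ ω, zf N i (Y ω) * zf N j (Y ω) ∂P = (if i = j then (1:ℝ)/N else 0) - (1/N)^2 := by
  by_cases hij : i = j
  · subst hij
    have heq : (fun ω => zf N i (Y ω) * zf N i (Y ω))
        = fun ω => ((1 - 2*(1/N)) * (if Y ω = i then (1:ℝ) else 0)
            + 0 * (if Y ω = i then (1:ℝ) else 0) + (1/N)^2) := by
      funext ω; unfold zf; by_cases h : Y ω = i <;> simp [h] <;> ring
    rw [heq, int_comb hY, int_ind hY hYunif hi]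
    rw [if_pos rfl]; ring
  · have hji : j ≠ i := fun hc => hij hc.symm
    have heq : (fun ω => zf N i (Y ω) * zf N j (Y ω))
        = fun ω => ((-(1/N)) * (if Y ω = i then (1:ℝ) else 0)
            + (-(1/N)) * (if Y ω = j then (1:ℝ) else 0) + (1/N)^2) := by
      funext ω; unfold zf
      by_cases h : Y ω = i
      · have h2 : Y ω ≠ j := fun hc => hij (h.symm.trans hc)
        simp [h, h2, hij]; ring
      · by_cases h2 : Y ω = j <;> simp [h, h2, hij, hji] <;> ring
    rw [heq, int_comb hY, int_ind hY hYunif hi, int_ind hY hYunif hj]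
    simp only [if_neg hij]
    ring
end Aux2

section Aux
variable {Ω : Type*} [MeasurableSpace Ω] {P : Measure Ω} [IsProbabilityMeasure P]

lemma aux_integrable {f : Ω → ℝ} (hm : Measurable f) {C : ℝ} (hb : ∀ ω, |f ω| ≤ C) :
    Integrable f P :=
  (integrable_const C).mono' hm.aestronglyMeasurable (ae_of_all _ (by simpa using hb))

lemma aux_single (Y : ℕ → Ω → ℕ) (hYmeas : ∀ s, Measurable (Y s))
    (hYindep : iIndepFun Y P)
    {u a b c : ℕ} (hua : u ≠ a) (hub : u ≠ b) (huc : u ≠ c)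
    (f g₁ g₂ g₃ : ℕ → ℝ) (hf : ∫ ω, f (Y u ω) ∂P = 0) :
    ∫ ω, f (Y u ω) * (g₁ (Y a ω) * g₂ (Y b ω) * g₃ (Y c ω)) ∂P = 0 := by
  classical
  set G : ℕ → ℕ → ℝ := fun x y =>
    (if x = a then g₁ y else 1) * (if x = b then g₂ y else 1) * (if x = c then g₃ y else 1)
    with hG
  set F : ℕ → Ω → ℝ := fun x => (if x = u then f else G x) ∘ Y x with hF
  have hFindep : iIndepFun F P :=
    hYindep.comp (fun x => if x = u then f else G x) (fun _ => measurable_from_nat)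
  have hFmeas : ∀ x, Measurable (F x) := fun x => measurable_from_nat.comp (hYmeas x)
  have hu : u ∉ ({a, b, c} : Finset ℕ) := by simp [hua, hub, huc]
  have hindep := hFindep.indepFun_finsetProd_of_notMem hFmeas hu
  have hprod : (∏ j ∈ ({a, b, c} : Finset ℕ), F j)
      = fun ω => g₁ (Y a ω) * g₂ (Y b ω) * g₃ (Y c ω) := by
    funext ω
    rw [Finset.prod_apply]
    have h1 : ∀ j ∈ ({a, b, c} : Finset ℕ), F j ω = G j (Y j ω) := by
      intro j hj
      have : j ≠ u := by rintro rfl; exact hu hj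
      simp [hF, this]
    rw [Finset.prod_congr rfl h1]
    simp only [hG, Finset.prod_mul_distrib]
    rw [Finset.prod_ite_eq' ({a,b,c} : Finset ℕ) a (fun j => g₁ (Y j ω)),
        Finset.prod_ite_eq' ({a,b,c} : Finset ℕ) b (fun j => g₂ (Y j ω)),
        Finset.prod_ite_eq' ({a,b,c} : Finset ℕ) c (fun j => g₃ (Y j ω))]
    simp
  have hFu : F u = fun ω => f (Y u ω) := by funext ω; simp [hF]
  have hmeasP : AEStronglyMeasurable (∏ j ∈ ({a, b, c} : Finset ℕ), F j) P := by
    rw [hprod]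
    exact (((measurable_from_nat.comp (hYmeas a)).mul
      (measurable_from_nat.comp (hYmeas b))).mul
        (measurable_from_nat.comp (hYmeas c))).aestronglyMeasurable
  have := hindep.integral_mul_eq_mul_integral hmeasP ((hFmeas u).aestronglyMeasurable)
  have hzero : ∫ ω, (∏ j ∈ ({a, b, c} : Finset ℕ), F j) ω * F u ω ∂P = 0 := by
    calc ∫ ω, (∏ j ∈ ({a, b, c} : Finset ℕ), F j) ω * F u ω ∂P
        = ∫ ω, ((∏ j ∈ ({a, b, c} : Finset ℕ), F j) * F u) ω ∂P := by rfl
      _ = (∫ ω, (∏ j ∈ ({a, b, c} : Finset ℕ), F j) ω ∂P) * ∫ ω, F u ω ∂P := this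
      _ = 0 := by rw [hFu]; simp [hf]
  rw [hprod, hFu] at hzero
  rw [← hzero]
  congr 1; funext ω; ring

end Aux


section KEY
variable {Ω : Type*} [MeasurableSpace Ω] {P : Measure Ω} [IsProbabilityMeasure P]

set_option maxHeartbeats 2000000 in
lemma key (P : Measure Ω) [IsProbabilityMeasure P]
    (N M : ℕ) (hN : 2 ≤ N) (hM : 1 ≤ M) (Y : ℕ → Ω → ℕ)
    (hYmeas : ∀ s, Measurable (Y s))
    (hYindep : iIndepFun Y P)
    (hYunif : ∀ s, ∀ i < N, P {ω | Y s ω = i} = 1 / N)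
    {ε : ℝ} (hε : 0 < ε) :
    P {ω | ε ≤ |((M:ℝ) / (1 - 1/N)) * ∑ i ∈ Finset.range N,
        ((((Finset.range M).filter (fun s => Y s ω = i)).card : ℝ) / M - 1/N)^2 - 1|}
      ≤ ENNReal.ofReal (16 / (ε^2 * N)) := by
  classical
  have hNR : (2:ℝ) ≤ N := by exact_mod_cast hN
  have hN0 : (0:ℝ) < N := by linarith
  have hM0 : (0:ℝ) < M := by exact_mod_cast hM
  have hp0 : (0:ℝ) < 1/N := by positivity
  have hple : (1:ℝ)/N ≤ 1/2 := by
    rw [div_le_div_iff₀ hN0 (by norm_num)]; linarith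
  have h1p : (0:ℝ) < 1 - 1/N := by linarith
  set V : ℕ × ℕ → Ω → ℝ :=
    fun q ω => ∑ i ∈ Finset.range N, zf N i (Y q.1 ω) * zf N i (Y q.2 ω) with hV
  set T : Ω → ℝ :=
    fun ω => (1/(M*(1 - 1/N))) * ∑ q ∈ (Finset.range M).offDiag, V q ω with hT
  have hzmeas : ∀ s i, Measurable (fun ω => zf N i (Y s ω)) :=
    fun s i => (measurable_from_nat (f := zf N i)).comp (hYmeas s)
  have hVmeas : ∀ q, Measurable (V q) :=
    fun q => Finset.measurable_sum _ (fun i _ => (hzmeas q.1 i).mul (hzmeas q.2 i))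
  have hzz : ∀ (s t : ℕ) (i j : ℕ) (ω : Ω), |zf N i (Y s ω) * zf N j (Y t ω)| ≤ 1 := by
    intro s t i j ω
    rw [abs_mul]
    exact mul_le_one₀ (zf_abs_le (by omega) _ _) (abs_nonneg _) (zf_abs_le (by omega) _ _)
  have hVabs : ∀ q ω, |V q ω| ≤ N := by
    intro q ω
    calc |V q ω| ≤ ∑ i ∈ Finset.range N, |zf N i (Y q.1 ω) * zf N i (Y q.2 ω)| :=
          Finset.abs_sum_le_sum_abs _ _
      _ ≤ ∑ _i ∈ Finset.range N, (1:ℝ) := Finset.sum_le_sum (fun i _ => hzz _ _ _ _ ω)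
      _ = N := by simp
  have hTmeas : Measurable T :=
    (Finset.measurable_sum _ fun q _ => hVmeas q).const_mul _
  -- a.s. all Y s ω < N
  have hae : ∀ᵐ ω ∂P, ∀ s, Y s ω < N := by
    rw [ae_all_iff]
    intro s
    have hms : ∀ i : ℕ, MeasurableSet {ω | Y s ω = i} :=
      fun i => hYmeas s (measurableSet_singleton i)
    have hun : {ω | Y s ω < N} = ⋃ i ∈ Finset.range N, {ω | Y s ω = i} := by
      ext ω
      simp only [Set.mem_setOf_eq, Set.mem_iUnion, Finset.mem_range, exists_prop]
      exact ⟨fun h => ⟨Y s ω, h, rfl⟩, fun ⟨i, hi, he⟩ => he ▸ hi⟩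
    have hsum : P {ω | Y s ω < N} = 1 := by
      rw [hun, measure_biUnion_finset ?_ (fun i _ => hms i)]
      · rw [Finset.sum_congr rfl (fun i hi => hYunif s i (Finset.mem_range.1 hi)),
          Finset.sum_const, Finset.card_range, nsmul_eq_mul, one_div,
          ENNReal.mul_inv_cancel (by exact_mod_cast (show N ≠ 0 by omega)) (by simp)]
      · intro i _ j _ hij
        exact Set.disjoint_left.2 fun ω h1 h2 => hij (h1.symm.trans h2)
    have hcompl : P {ω | ¬ (Y s ω < N)} = 0 := by
      have hmsS : MeasurableSet {ω | Y s ω < N} := by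
        rw [hun]; exact (Finset.range N).measurableSet_biUnion (fun i _ => hms i)
      have hc : {ω | ¬ (Y s ω < N)} = {ω | Y s ω < N}ᶜ := rfl
      rw [hc, measure_compl hmsS (measure_ne_top _ _), hsum]
      simp
    exact ae_iff.2 hcompl
  have hNne : (N:ℝ) ≠ 0 := ne_of_gt hN0
  have hMne : (M:ℝ) ≠ 0 := ne_of_gt hM0
  -- diagonal identity
  have hdiag : ∀ y : ℕ, y < N → ∑ i ∈ Finset.range N, zf N i y * zf N i y = 1 - 1/N := by
    intro y hy
    have h1 : ∀ i ∈ Finset.range N, zf N i y * zf N i y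
        = (1 - 2*(1/(N:ℝ))) * (if y = i then (1:ℝ) else 0) + (1/N)^2 := by
      intro i _; unfold zf; by_cases h : y = i <;> simp [h] <;> ring
    rw [Finset.sum_congr rfl h1, Finset.sum_add_distrib, ← Finset.mul_sum,
      Finset.sum_ite_eq (Finset.range N) y (fun _ => (1:ℝ)), if_pos (Finset.mem_range.2 hy),
      Finset.sum_const, Finset.card_range, nsmul_eq_mul]
    field_simp
    ring
  -- pointwise identity
  have hId : ∀ᵐ ω ∂P, ((M:ℝ) / (1 - 1/N)) * ∑ i ∈ Finset.range N,
      ((((Finset.range M).filter (fun s => Y s ω = i)).card : ℝ) / M - 1/N)^2 - 1 = T ω := by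
    filter_upwards [hae] with ω hω
    have hterm : ∀ i : ℕ, ((((Finset.range M).filter (fun s => Y s ω = i)).card : ℝ) / M - 1/N)
        = (1/M) * ∑ s ∈ Finset.range M, zf N i (Y s ω) := by
      intro i
      have hcard : ((((Finset.range M).filter (fun s => Y s ω = i)).card : ℝ))
          = ∑ s ∈ Finset.range M, (if Y s ω = i then (1:ℝ) else 0) := by
        rw [Finset.card_filter]
        push_cast
        exact Finset.sum_congr rfl (fun s _ => by split <;> simp)
      unfold zf
      rw [Finset.sum_sub_distrib, Finset.sum_const, Finset.card_range, ← hcard, nsmul_eq_mul]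
      field_simp
    have h1 : ∀ i ∈ Finset.range N,
        ((((Finset.range M).filter (fun s => Y s ω = i)).card : ℝ) / M - 1/N)^2
        = (1/(M:ℝ))^2 * ((∑ s ∈ Finset.range M, zf N i (Y s ω))
            * (∑ t ∈ Finset.range M, zf N i (Y t ω))) := by
      intro i _
      rw [hterm i, mul_pow, pow_two]
      ring
    rw [Finset.sum_congr rfl h1, ← Finset.mul_sum]
    have h2 : ∀ i ∈ Finset.range N,
        (∑ s ∈ Finset.range M, zf N i (Y s ω)) * (∑ t ∈ Finset.range M, zf N i (Y t ω))
        = ∑ q ∈ (Finset.range M) ×ˢ (Finset.range M), zf N i (Y q.1 ω) * zf N i (Y q.2 ω) := by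
      intro i _
      rw [Finset.sum_mul_sum, Finset.sum_product]
    rw [Finset.sum_congr rfl h2, Finset.sum_comm, ← Finset.diag_union_offDiag (Finset.range M),
      Finset.sum_union (Finset.disjoint_diag_offDiag _), Finset.sum_diag,
      Finset.sum_congr rfl (fun s _ => hdiag (Y s ω) (hω s)),
      Finset.sum_const, Finset.card_range, nsmul_eq_mul]
    simp only [hT, hV]
    have hbne : ((1:ℝ) - 1/N) ≠ 0 := ne_of_gt h1p
    have hN1ne : (N:ℝ) - 1 ≠ 0 := by linarith
    field_simp
    ring
  -- integrability helpers
  have hint2 : ∀ (f g : Ω → ℝ), Measurable f → Measurable g → (∀ ω, |f ω| ≤ 1)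
      → (∀ ω, |g ω| ≤ 1) → Integrable (fun ω => f ω * g ω) P := fun f g hf hg hbf hbg =>
    aux_integrable' (hf.mul hg) (C := 1)
      (fun ω => by rw [abs_mul]; exact mul_le_one₀ (hbf ω) (abs_nonneg _) (hbg ω))
  have hVVint : ∀ q q' : ℕ × ℕ, Integrable (fun ω => V q ω * V q' ω) P := fun q q' =>
    aux_integrable' ((hVmeas q).mul (hVmeas q')) (C := (N:ℝ)*N) (fun ω => by
      rw [abs_mul]
      exact mul_le_mul (hVabs q ω) (hVabs q' ω) (abs_nonneg _) hN0.le)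
  have hterm_int : ∀ (s t s' t' i j : ℕ), Integrable (fun ω =>
      (zf N i (Y s ω) * zf N i (Y t ω)) * (zf N j (Y s' ω) * zf N j (Y t' ω))) P := by
    intro s t s' t' i j
    exact hint2 _ _ ((hzmeas s i).mul (hzmeas t i)) ((hzmeas s' j).mul (hzmeas t' j))
      (fun ω => hzz s t i i ω) (fun ω => hzz s' t' j j ω)
  -- expansion of the second moment
  have hexp : ∫ ω, T ω^2 ∂P
      = (1/(M*(1 - 1/N)))^2 * ∑ q ∈ (Finset.range M).offDiag,
          ∑ q' ∈ (Finset.range M).offDiag, ∫ ω, V q ω * V q' ω ∂P := by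
    have hfun : (fun ω => T ω^2) = fun ω => (1/((M:ℝ)*(1 - 1/N)))^2 *
        ∑ q ∈ (Finset.range M).offDiag, ∑ q' ∈ (Finset.range M).offDiag, V q ω * V q' ω := by
      funext ω
      simp only [hT]
      rw [mul_pow, pow_two (∑ q ∈ (Finset.range M).offDiag, V q ω), Finset.sum_mul_sum]
    rw [hfun, integral_const_mul,
      integral_finset_sum _ (fun q _ => integrable_finset_sum _ (fun q' _ => hVVint q q'))]
    congr 1
    exact Finset.sum_congr rfl fun q _ =>
      integral_finset_sum _ (fun q' _ => hVVint q q')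
  -- vanishing of unmatched pairs
  have hvan : ∀ q ∈ (Finset.range M).offDiag, ∀ q' ∈ (Finset.range M).offDiag,
      q' ≠ q → q' ≠ q.swap → ∫ ω, V q ω * V q' ω ∂P = 0 := by
    rintro ⟨s, t⟩ hq ⟨s', t'⟩ hq' hne hns
    have hst : s ≠ t := (Finset.mem_offDiag.1 hq).2.2
    have hexp2 : (fun ω => V (s,t) ω * V (s',t') ω) = fun ω => ∑ i ∈ Finset.range N,
        ∑ j ∈ Finset.range N,
        (zf N i (Y s ω) * zf N i (Y t ω)) * (zf N j (Y s' ω) * zf N j (Y t' ω)) := by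
      funext ω; simp only [hV]; rw [Finset.sum_mul_sum]
    rw [hexp2, integral_finset_sum _
      (fun i _ => integrable_finset_sum _ (fun j _ => hterm_int s t s' t' i j))]
    refine Finset.sum_eq_zero fun i hi => ?_
    rw [integral_finset_sum _ (fun j _ => hterm_int s t s' t' i j)]
    refine Finset.sum_eq_zero fun j hj => ?_
    have hiN := Finset.mem_range.1 hi
    have hcase : (s ≠ t ∧ s ≠ s' ∧ s ≠ t') ∨ (t ≠ s ∧ t ≠ s' ∧ t ≠ t') := by
      by_cases h1 : s = s'
      · subst h1
        exact Or.inr ⟨Ne.symm hst, Ne.symm hst, fun h => hne (by rw [← h])⟩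
      · by_cases h2 : s = t'
        · subst h2
          refine Or.inr ⟨Ne.symm hst, fun h => hns ?_, Ne.symm hst⟩
          rw [← h, Prod.swap_prod_mk]
        · exact Or.inl ⟨hst, h1, h2⟩
    rcases hcase with ⟨h1, h2, h3⟩ | ⟨h1, h2, h3⟩
    · have hre : (fun ω => (zf N i (Y s ω) * zf N i (Y t ω))
          * (zf N j (Y s' ω) * zf N j (Y t' ω)))
          = fun ω => zf N i (Y s ω)
            * (zf N i (Y t ω) * zf N j (Y s' ω) * zf N j (Y t' ω)) := by
        funext ω; ring
      rw [hre]
      exact aux_single Y hYmeas hYindep h1 h2 h3 _ _ _ _ (int_zf (hYmeas s) (hYunif s) hiN)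
    · have hre : (fun ω => (zf N i (Y s ω) * zf N i (Y t ω))
          * (zf N j (Y s' ω) * zf N j (Y t' ω)))
          = fun ω => zf N i (Y t ω)
            * (zf N i (Y s ω) * zf N j (Y s' ω) * zf N j (Y t' ω)) := by
        funext ω; ring
      rw [hre]
      exact aux_single Y hYmeas hYindep h1 h2 h3 _ _ _ _ (int_zf (hYmeas t) (hYunif t) hiN)
  -- bound for matched pairs
  have hC2 : ∀ i ∈ Finset.range N, ∀ j ∈ Finset.range N,
      ((if i = j then (1:ℝ)/N else 0) - (1/N)^2)^2
        ≤ (if i = j then ((1:ℝ)/N)^2 else 0) + (1/(N:ℝ))^4 := by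
    intro i _ j _
    by_cases h : i = j
    · subst h
      simp only [eq_self_iff_true, if_true]
      nlinarith [hp0, hple]
    · simp only [if_neg h]
      nlinarith [hp0]
  have hdouble : ∑ i ∈ Finset.range N, ∑ j ∈ Finset.range N,
      ((if i = j then (1:ℝ)/N else 0) - (1/N)^2)^2 ≤ 2/(N:ℝ) := by
    calc ∑ i ∈ Finset.range N, ∑ j ∈ Finset.range N,
        ((if i = j then (1:ℝ)/N else 0) - (1/N)^2)^2
        ≤ ∑ i ∈ Finset.range N, ∑ j ∈ Finset.range N,
            ((if i = j then ((1:ℝ)/N)^2 else 0) + (1/(N:ℝ))^4) :=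
          Finset.sum_le_sum fun i hi => Finset.sum_le_sum fun j hj => hC2 i hi j hj
      _ = ∑ _i ∈ Finset.range N, (((1:ℝ)/N)^2 + (N:ℝ) * (1/N)^4) := by
          refine Finset.sum_congr rfl fun i hi => ?_
          rw [Finset.sum_add_distrib,
            Finset.sum_ite_eq (Finset.range N) i (fun _ => ((1:ℝ)/N)^2), if_pos hi,
            Finset.sum_const, Finset.card_range, nsmul_eq_mul]
      _ = (N:ℝ) * (((1:ℝ)/N)^2 + (N:ℝ) * (1/N)^4) := by
          rw [Finset.sum_const, Finset.card_range, nsmul_eq_mul]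
      _ ≤ 2/(N:ℝ) := by
          have he : (N:ℝ) * ((1/N)^2 + (N:ℝ)*(1/N)^4) = 1/N + 1/N^2 := by
            field_simp
          rw [he]
          have h2 : (1:ℝ)/N^2 ≤ 1/N := by
            rw [div_le_div_iff₀ (by positivity) hN0]
            nlinarith
          have h3 : (2:ℝ)/N = 1/N + 1/N := by ring
          linarith
  have hmatch : ∀ s t : ℕ, s ≠ t → |∫ ω, V (s,t) ω * V (s,t) ω ∂P| ≤ 2/(N:ℝ) := by
    intro s t hst
    have hval : ∫ ω, V (s,t) ω * V (s,t) ω ∂P = ∑ i ∈ Finset.range N, ∑ j ∈ Finset.range N,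
        ((if i = j then (1:ℝ)/N else 0) - (1/N)^2)^2 := by
      have hre : (fun ω => V (s,t) ω * V (s,t) ω) = fun ω => ∑ i ∈ Finset.range N,
          ∑ j ∈ Finset.range N,
          (zf N i (Y s ω) * zf N j (Y s ω)) * (zf N i (Y t ω) * zf N j (Y t ω)) := by
        funext ω; simp only [hV]; rw [Finset.sum_mul_sum]
        exact Finset.sum_congr rfl fun i _ => Finset.sum_congr rfl fun j _ => by ring
      rw [hre, integral_finset_sum _ (fun i _ => integrable_finset_sum _ (fun j _ =>
        hint2 (fun ω => zf N i (Y s ω) * zf N j (Y s ω)) (fun ω => zf N i (Y t ω) * zf N j (Y t ω)) ((hzmeas s i).mul (hzmeas s j)) ((hzmeas t i).mul (hzmeas t j))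
          (fun ω => hzz s s i j ω) (fun ω => hzz t t i j ω)))]
      refine Finset.sum_congr rfl fun i hi => ?_
      rw [integral_finset_sum _ (fun j _ =>
        hint2 (fun ω => zf N i (Y s ω) * zf N j (Y s ω)) (fun ω => zf N i (Y t ω) * zf N j (Y t ω)) ((hzmeas s i).mul (hzmeas s j)) ((hzmeas t i).mul (hzmeas t j))
          (fun ω => hzz s s i j ω) (fun ω => hzz t t i j ω))]
      refine Finset.sum_congr rfl fun j hj => ?_
      have hiN := Finset.mem_range.1 hi
      have hjN := Finset.mem_range.1 hj
      have hind : IndepFun (fun ω => zf N i (Y s ω) * zf N j (Y s ω))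
          (fun ω => zf N i (Y t ω) * zf N j (Y t ω)) P :=
        (hYindep.indepFun hst).comp
          (measurable_from_nat (f := fun y => zf N i y * zf N j y))
          (measurable_from_nat (f := fun y => zf N i y * zf N j y))
      have hmul := hind.integral_mul_eq_mul_integral
        ((hzmeas s i).mul (hzmeas s j)).aestronglyMeasurable
        ((hzmeas t i).mul (hzmeas t j)).aestronglyMeasurable
      calc ∫ ω, (zf N i (Y s ω) * zf N j (Y s ω)) * (zf N i (Y t ω) * zf N j (Y t ω)) ∂P
          = (∫ ω, zf N i (Y s ω) * zf N j (Y s ω) ∂P)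
            * (∫ ω, zf N i (Y t ω) * zf N j (Y t ω) ∂P) := hmul
        _ = ((if i = j then (1:ℝ)/N else 0) - (1/N)^2)^2 := by
            rw [int_zf_mul (hYmeas s) (hYunif s) hiN hjN,
              int_zf_mul (hYmeas t) (hYunif t) hiN hjN]
            ring
    rw [hval, abs_of_nonneg (Finset.sum_nonneg fun i _ =>
      Finset.sum_nonneg fun j _ => sq_nonneg _)]
    exact hdouble
  -- row bound
  have hrow : ∀ q ∈ (Finset.range M).offDiag,
      |∑ q' ∈ (Finset.range M).offDiag, ∫ ω, V q ω * V q' ω ∂P| ≤ 4/(N:ℝ) := by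
    rintro ⟨s, t⟩ hq
    have hst : s ≠ t := (Finset.mem_offDiag.1 hq).2.2
    have hsub : ∑ q' ∈ (Finset.range M).offDiag, ∫ ω, V (s,t) ω * V q' ω ∂P
        = ∑ q' ∈ (Finset.range M).offDiag ∩ {((s,t) : ℕ × ℕ), (t,s)},
            ∫ ω, V (s,t) ω * V q' ω ∂P := by
      refine (Finset.sum_subset Finset.inter_subset_left ?_).symm
      intro x hx hnx
      have hx1 : x ≠ (s,t) := fun h => hnx (Finset.mem_inter.2 ⟨hx, by simp [h]⟩)
      have hx2 : x ≠ (t,s) := fun h => hnx (Finset.mem_inter.2 ⟨hx, by simp [h]⟩)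
      exact hvan (s,t) hq x hx hx1 hx2
    have hVswap : V (t,s) = V (s,t) :=
      funext fun ω => Finset.sum_congr rfl fun i _ => mul_comm _ _
    rw [hsub]
    have hcard : (((Finset.range M).offDiag ∩ {((s,t) : ℕ × ℕ), (t,s)}).card : ℝ) ≤ 2 := by
      have h1 : ((Finset.range M).offDiag ∩ {((s,t) : ℕ × ℕ), (t,s)}).card
          ≤ ({(s,t), (t,s)} : Finset (ℕ × ℕ)).card :=
        Finset.card_le_card Finset.inter_subset_right
      have h2 : ({(s,t), (t,s)} : Finset (ℕ × ℕ)).card ≤ 2 := by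
        apply le_trans (Finset.card_insert_le _ _)
        simp
      exact_mod_cast le_trans h1 h2
    calc |∑ q' ∈ (Finset.range M).offDiag ∩ {((s,t) : ℕ × ℕ), (t,s)},
            ∫ ω, V (s,t) ω * V q' ω ∂P|
        ≤ ∑ q' ∈ (Finset.range M).offDiag ∩ {((s,t) : ℕ × ℕ), (t,s)},
            |∫ ω, V (s,t) ω * V q' ω ∂P| := Finset.abs_sum_le_sum_abs _ _
      _ ≤ ∑ _q' ∈ (Finset.range M).offDiag ∩ {((s,t) : ℕ × ℕ), (t,s)}, 2/(N:ℝ) := by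
          refine Finset.sum_le_sum fun q' hq' => ?_
          rcases Finset.mem_insert.1 (Finset.mem_inter.1 hq').2 with rfl | h
          · exact hmatch s t hst
          · rw [Finset.mem_singleton.1 h, hVswap]
            exact hmatch s t hst
      _ = (((Finset.range M).offDiag ∩ {((s,t) : ℕ × ℕ), (t,s)}).card : ℝ) * (2/N) := by
          rw [Finset.sum_const, nsmul_eq_mul]
      _ ≤ 2 * (2/N) := mul_le_mul_of_nonneg_right hcard (by positivity)
      _ = 4/(N:ℝ) := by ring
  -- total bound
  have hS : ∑ q ∈ (Finset.range M).offDiag, ∑ q' ∈ (Finset.range M).offDiag,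
      ∫ ω, V q ω * V q' ω ∂P ≤ (M:ℝ)^2 * (4/N) := by
    have hcard : (((Finset.range M).offDiag.card : ℝ)) ≤ (M:ℝ)^2 := by
      have h1 : (Finset.range M).offDiag.card ≤ M * M := by
        rw [Finset.offDiag_card, Finset.card_range]
        omega
      calc (((Finset.range M).offDiag.card : ℝ)) ≤ ((M * M : ℕ) : ℝ) := by exact_mod_cast h1
        _ = (M:ℝ)^2 := by push_cast; ring
    calc ∑ q ∈ (Finset.range M).offDiag, ∑ q' ∈ (Finset.range M).offDiag,
          ∫ ω, V q ω * V q' ω ∂P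
        ≤ |∑ q ∈ (Finset.range M).offDiag, ∑ q' ∈ (Finset.range M).offDiag,
            ∫ ω, V q ω * V q' ω ∂P| := le_abs_self _
      _ ≤ ∑ q ∈ (Finset.range M).offDiag, |∑ q' ∈ (Finset.range M).offDiag,
            ∫ ω, V q ω * V q' ω ∂P| := Finset.abs_sum_le_sum_abs _ _
      _ ≤ ∑ _q ∈ (Finset.range M).offDiag, 4/(N:ℝ) := Finset.sum_le_sum hrow
      _ = (((Finset.range M).offDiag.card : ℝ)) * (4/N) := by
          rw [Finset.sum_const, nsmul_eq_mul]
      _ ≤ (M:ℝ)^2 * (4/N) := mul_le_mul_of_nonneg_right hcard (by positivity)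
  -- second moment bound
  have hint : ∫ ω, T ω^2 ∂P ≤ 16/(N:ℝ) := by
    rw [hexp]
    calc (1/((M:ℝ)*(1 - 1/N)))^2 * ∑ q ∈ (Finset.range M).offDiag,
          ∑ q' ∈ (Finset.range M).offDiag, ∫ ω, V q ω * V q' ω ∂P
        ≤ (1/((M:ℝ)*(1 - 1/N)))^2 * ((M:ℝ)^2 * (4/N)) :=
          mul_le_mul_of_nonneg_left hS (by positivity)
      _ ≤ 16/(N:ℝ) := by
          have hb : ((1:ℝ) - 1/N) ≠ 0 := ne_of_gt h1p
          have hEq : (1/((M:ℝ)*(1 - 1/N)))^2 * ((M:ℝ)^2 * (4/N))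
              = 4/((N:ℝ)*(1-1/N)^2) := by
            rw [div_pow, one_pow, mul_pow]
            rw [div_mul_eq_mul_div, one_mul,
              div_eq_div_iff (by positivity) (by positivity)]
            field_simp
          rw [hEq, div_le_div_iff₀ (by positivity) hN0]
          have hq : ((1:ℝ) - 1/N)^2 ≥ 1/4 := by nlinarith [hple, hp0]
          nlinarith [hN0]
  -- Chebyshev & conclusion
  have hTabs : ∀ ω, |T ω| ≤ (1/((M:ℝ)*(1 - 1/N)))
      * ((((Finset.range M).offDiag.card : ℝ)) * N) := by
    intro ω
    simp only [hT]
    rw [abs_mul, abs_of_nonneg (show (0:ℝ) ≤ 1/((M:ℝ)*(1 - 1/N)) by positivity)]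
    refine mul_le_mul_of_nonneg_left ?_ (by positivity)
    calc |∑ q ∈ (Finset.range M).offDiag, V q ω|
        ≤ ∑ q ∈ (Finset.range M).offDiag, |V q ω| := Finset.abs_sum_le_sum_abs _ _
      _ ≤ ∑ _q ∈ (Finset.range M).offDiag, (N:ℝ) := Finset.sum_le_sum fun q _ => hVabs q ω
      _ = (((Finset.range M).offDiag.card : ℝ)) * N := by
          rw [Finset.sum_const, nsmul_eq_mul]
  have hT2int : Integrable (fun ω => T ω^2) P := by
    refine aux_integrable' (hTmeas.pow_const 2)
      (C := ((1/((M:ℝ)*(1 - 1/N))) * ((((Finset.range M).offDiag.card : ℝ)) * N))^2)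
      (fun ω => ?_)
    rw [abs_pow]
    exact pow_le_pow_left₀ (abs_nonneg _) (hTabs ω) 2
  have hset2 : {ω | ε ≤ |T ω|} = {ω | ε^2 ≤ T ω^2} := by
    ext ω
    simp only [Set.mem_setOf_eq]
    constructor
    · intro h
      rw [← sq_abs (T ω)]
      exact pow_le_pow_left₀ hε.le h 2
    · intro h
      nlinarith [sq_abs (T ω), abs_nonneg (T ω)]
  have hmark := mul_meas_ge_le_integral_of_nonneg
    (ae_of_all P fun ω => sq_nonneg (T ω)) hT2int (ε^2)
  have h16 := le_trans hmark hint
  have htoReal : (P {ω | ε ≤ |T ω|}).toReal ≤ 16/(ε^2*N) := by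
    rw [hset2]
    have hx : (0:ℝ) < ε^2 := by positivity
    rw [le_div_iff₀ (by positivity : (0:ℝ) < ε^2*N)]
    have h17 : ε^2 * (P {x | ε^2 ≤ T x^2}).toReal * N ≤ 16 := by
      have := mul_le_mul_of_nonneg_right h16 hN0.le
      rwa [div_mul_cancel₀ _ hNne] at this
    calc (P {x | ε^2 ≤ T x^2}).toReal * (ε^2*N)
        = ε^2 * (P {x | ε^2 ≤ T x^2}).toReal * N := by ring
      _ ≤ 16 := h17
  have hsets : P {ω | ε ≤ |((M:ℝ) / (1 - 1/N)) * ∑ i ∈ Finset.range N,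
      ((((Finset.range M).filter (fun s => Y s ω = i)).card : ℝ) / M - 1/N)^2 - 1|}
      = P {ω | ε ≤ |T ω|} := by
    refine measure_congr (eventuallyEq_set.2 ?_)
    filter_upwards [hId] with ω h
    simp only [Set.mem_setOf_eq, h]
  rw [hsets]
  calc P {ω | ε ≤ |T ω|}
      = ENNReal.ofReal ((P {ω | ε ≤ |T ω|}).toReal) :=
        (ENNReal.ofReal_toReal (measure_ne_top _ _)).symm
    _ ≤ ENNReal.ofReal (16 / (ε^2 * N)) := ENNReal.ofReal_le_ofReal htoReal

end KEY


/-- For Efron multinomial weights `(w₁⁽ⁿ⁾,…,w_n⁽ⁿ⁾) ~ Multinomial(m_n; 1/n,…,1/n)`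
(realized as the category counts of `m_n` i.i.d. uniform draws), if `m_n → ∞` and `m_n = o(n²)`,
then `(m_n/(1 − 1/n)) ∑_i (w_i/m_n − 1/n)² → 1` in probability. -/
theorem stmt7
    {Ω : Type*} [MeasurableSpace Ω] (P : Measure Ω) [IsProbabilityMeasure P]
    (m : ℕ → ℕ) (Y : (n : ℕ) → ℕ → Ω → ℕ) (w : (n : ℕ) → ℕ → Ω → ℕ)
    (hYmeas : ∀ n s, Measurable (Y n s))
    (hYindep : ∀ n, iIndepFun (Y n) P)
    (hYunif : ∀ n, ∀ s, ∀ i < n, P {ω | Y n s ω = i} = 1 / n)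
    (hw : ∀ n i ω, w n i ω = ((Finset.range (m n)).filter (fun s => Y n s ω = i)).card)
    (hm : Tendsto m atTop atTop)
    (hmn : Tendsto (fun n => (m n : ℝ) / (n : ℝ) ^ 2) atTop (nhds 0)) :
    TendstoInMeasure P
      (fun n ω =>
        ((m (n + 1) : ℝ) / (1 - 1 / ((n : ℝ) + 1))) *
          ∑ i ∈ Finset.range (n + 1), ((w (n + 1) i ω : ℝ) / (m (n + 1)) - 1 / (n + 1)) ^ 2)
      atTop (fun _ => 1) := by
  rw [tendstoInMeasure_iff_dist]
  intro ε hε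
  have hMev : ∀ᶠ n : ℕ in atTop, 1 ≤ m (n + 1) :=
    (hm.comp (tendsto_add_atTop_nat 1)).eventually_ge_atTop 1
  have hb : ∀ᶠ n : ℕ in atTop,
      P {ω | ε ≤ dist (((m (n + 1) : ℝ) / (1 - 1 / ((n : ℝ) + 1))) *
          ∑ i ∈ Finset.range (n + 1), ((w (n + 1) i ω : ℝ) / (m (n + 1)) - 1 / (n + 1)) ^ 2) 1}
        ≤ ENNReal.ofReal (16 / (ε ^ 2 * ((n : ℝ) + 1))) := by
    filter_upwards [hMev, eventually_ge_atTop 1] with n hMn hn1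
    have hkey := key P (n + 1) (m (n + 1)) (by omega) hMn (Y (n + 1)) (hYmeas (n + 1))
      (hYindep (n + 1)) (fun s i hi => hYunif (n + 1) s i hi) hε
    have hsetEq : {ω | ε ≤ dist (((m (n + 1) : ℝ) / (1 - 1 / ((n : ℝ) + 1))) *
          ∑ i ∈ Finset.range (n + 1), ((w (n + 1) i ω : ℝ) / (m (n + 1)) - 1 / (n + 1)) ^ 2) 1}
        = {ω | ε ≤ |((m (n + 1) : ℕ) : ℝ) / (1 - 1 / ((n + 1 : ℕ) : ℝ)) *
            ∑ i ∈ Finset.range (n + 1),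
              ((((Finset.range (m (n + 1))).filter (fun s => Y (n + 1) s ω = i)).card : ℝ)
                / ((m (n + 1) : ℕ) : ℝ) - 1 / ((n + 1 : ℕ) : ℝ)) ^ 2 - 1|} := by
      ext ω
      simp only [Real.dist_eq, Set.mem_setOf_eq, hw, Nat.cast_add, Nat.cast_one]
    rw [hsetEq]
    have hval : (16 : ℝ) / (ε ^ 2 * ((n : ℝ) + 1)) = 16 / (ε ^ 2 * ((n + 1 : ℕ) : ℝ)) := by
      push_cast
      ring
    rw [hval]
    exact hkey
  have hlim : Tendsto (fun n : ℕ => ENNReal.ofReal (16 / (ε ^ 2 * ((n : ℝ) + 1))))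
      atTop (nhds 0) := by
    have h0 : Tendsto (fun n : ℕ => 16 / (ε ^ 2 * ((n : ℝ) + 1))) atTop (nhds 0) := by
      have h1 : (fun n : ℕ => 16 / (ε ^ 2 * ((n : ℝ) + 1)))
          = fun n : ℕ => (16 / ε ^ 2) * (1 / ((n : ℝ) + 1)) := by
        funext n
        field_simp
      rw [h1]
      have h := tendsto_one_div_add_atTop_nhds_zero_nat.const_mul (16 / ε ^ 2)
      rw [mul_zero] at h
      exact h
    have h2 := ENNReal.tendsto_ofReal h0
    simpa using h2
  exact tendsto_of_tendsto_of_tendsto_of_le_of_le' tendsto_const_nhds hlim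
    (Eventually.of_forall fun n => zero_le) hb
end

section
/- Let X_1,...,X_n be i.i.d. real random variables with finite variance σ² and let (w_1(b))_{i≤n} and (w_1(b'))_{i≤n} be two independent Multinomial(m_n; 1/n,...,1/n) vectors, both independent of the X's. Define T(b) = Σ_i (w_i(b)/m_n − 1/n) X_i / (σ √(Σ_k (w_k(b)/m_n − 1/n)²)) and similarly T(b'). Then the conditional expectation given the weights satisfies E[T(b)T(b') | weights] = Σ_i (w_i(b)/m_n − 1/n)(w_i(b')/m_n − 1/n) / ( √(Σ_k (w_k(b)/m_n − 1/n)²) √(Σ_l (w_l(b')/m_n − 1/n)²) ), and this quantity converges to 0 in probability (with respect to the law of the weights) as n, m_n → ∞ with m_n = o(n²). -/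
open MeasureTheory ProbabilityTheory Filter Finset

open scoped ENNReal NNReal Topology

noncomputable def s18cnt {M : ℕ} (z : Fin M → ℕ) (i : ℕ) : ℕ :=
  (Finset.univ.filter (fun s => z s = i)).card

noncomputable def s18h (N : ℕ) {M : ℕ} (i : ℕ) (z : Fin M → ℕ) : ℝ :=
  ((s18cnt z i : ℝ) / M - 1 / N) /
    Real.sqrt (∑ k ∈ Finset.range N, ((s18cnt z k : ℝ) / M - 1 / N) ^ 2)

lemma s18card (M : ℕ) (P : ℕ → Prop) [DecidablePred P] :
    ((Finset.range M).filter P).card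
      = (Finset.univ.filter (fun s : Fin M => P s.val)).card := by
  rw [Finset.card_filter, Finset.card_filter]
  exact (Fin.sum_univ_eq_sum_range (fun s => if P s then 1 else 0) M).symm

lemma s18h_measurable (N M : ℕ) (i : ℕ) : Measurable (s18h N (M := M) i) :=
  measurable_of_countable _

lemma s18h_abs_le {N M : ℕ} (i : ℕ) (hi : i < N) (z : Fin M → ℕ) :
    |s18h N i z| ≤ 1 := by
  set c : ℕ → ℝ := fun k => (s18cnt z k : ℝ) / M - 1 / N with hc
  set S : ℝ := ∑ k ∈ Finset.range N, c k ^ 2 with hS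
  have hS0 : 0 ≤ S := Finset.sum_nonneg fun k _ => sq_nonneg _
  have hle : c i ^ 2 ≤ S :=
    Finset.single_le_sum (fun k _ => sq_nonneg (c k)) (Finset.mem_range.mpr hi)
  have habs : |c i| ≤ Real.sqrt S := Real.abs_le_sqrt hle
  unfold s18h
  rw [abs_div, abs_of_nonneg (Real.sqrt_nonneg _)]
  rcases eq_or_lt_of_le (Real.sqrt_nonneg S) with h0 | h0
  · rw [← h0] at habs ⊢
    have : c i = 0 := abs_nonpos_iff.mp habs
    simp [← hc, this]
  · rw [div_le_one h0]; exact habs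

lemma s18h_sq_sum {M : ℕ} (N : ℕ) (z : Fin M → ℕ) :
    ∑ i ∈ Finset.range N, (s18h N i z) ^ 2 ≤ 1 := by
  set c : ℕ → ℝ := fun k => (s18cnt z k : ℝ) / M - 1 / N with hc
  set S : ℝ := ∑ k ∈ Finset.range N, c k ^ 2 with hS
  have hS0 : 0 ≤ S := Finset.sum_nonneg fun k _ => sq_nonneg _
  have h1 : ∀ i, (s18h N i z) ^ 2 = c i ^ 2 / S := by
    intro i
    unfold s18h
    rw [div_pow, Real.sq_sqrt hS0]
  calc ∑ i ∈ Finset.range N, (s18h N i z) ^ 2 = (∑ i ∈ Finset.range N, c i ^ 2) / S := by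
        rw [Finset.sum_congr rfl (fun i _ => h1 i), ← Finset.sum_div]
    _ = S / S := by rw [← hS]
    _ ≤ 1 := div_self_le_one S

lemma s18h_sum {M : ℕ} (N : ℕ) (hN : 0 < N) (hM : 0 < M) (z : Fin M → ℕ)
    (hz : ∀ s, z s < N) : ∑ i ∈ Finset.range N, s18h N i z = 0 := by
  have hcnt : ∑ i ∈ Finset.range N, (s18cnt z i : ℝ) = M := by
    have h := Finset.card_eq_sum_card_fiberwise
      (f := z) (s := (Finset.univ : Finset (Fin M))) (t := Finset.range N)
      (fun x _ => Finset.mem_range.mpr (hz x))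
    have : (M : ℝ) = ∑ i ∈ Finset.range N, ((Finset.univ.filter fun s => z s = i).card : ℝ) := by
      rw [← Nat.cast_sum]
      norm_cast
      simpa [Finset.card_univ] using h
    rw [this]
    rfl
  have hsum : ∑ i ∈ Finset.range N, ((s18cnt z i : ℝ) / M - 1 / N) = 0 := by
    rw [Finset.sum_sub_distrib, ← Finset.sum_div, hcnt, Finset.sum_const, Finset.card_range]
    have h1 : (M : ℝ) / M = 1 := div_self (by positivity)
    have h2 : (N : ℕ) • ((1 : ℝ) / N) = 1 := by
      rw [nsmul_eq_mul]
      field_simp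
    rw [h1, h2, sub_self]
  unfold s18h
  rw [← Finset.sum_div, hsum, zero_div]

lemma s18h_perm {M : ℕ} (N : ℕ) (τ : Equiv.Perm ℕ) (hτ : ∀ k, k < N ↔ τ k < N)
    (i : ℕ) (z : Fin M → ℕ) :
    s18h N (τ i) z = s18h N i (fun s => τ.symm (z s)) := by
  have hcnt : ∀ k, s18cnt (fun s => τ.symm (z s)) k = s18cnt z (τ k) := by
    intro k
    unfold s18cnt
    congr 1
    exact Finset.filter_congr fun s _ => by
      simp [Equiv.symm_apply_eq]
  have hden : ∑ k ∈ Finset.range N, ((s18cnt (fun s => τ.symm (z s)) k : ℝ) / M - 1 / N) ^ 2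
      = ∑ k ∈ Finset.range N, ((s18cnt z k : ℝ) / M - 1 / N) ^ 2 := by
    rw [Finset.sum_congr rfl (fun k _ => by rw [hcnt k])]
    exact Finset.sum_equiv τ (fun k => by simp [Finset.mem_range, hτ k]) (fun k _ => rfl)
  unfold s18h
  rw [hcnt i, hden]

lemma s18swap_lt {N : ℕ} {a b : ℕ} (ha : a < N) (hb : b < N) (k : ℕ) :
    k < N ↔ Equiv.swap a b k < N := by
  rcases eq_or_ne k a with rfl | hka
  · simp [Equiv.swap_apply_left, ha, hb]
  rcases eq_or_ne k b with rfl | hkb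
  · simp [Equiv.swap_apply_right, ha, hb]
  · rw [Equiv.swap_apply_of_ne_of_ne hka hkb]

lemma s18marg {Ωw : Type*} [MeasurableSpace Ωw] (Pw : Measure Ωw) [IsProbabilityMeasure Pw]
    (N : ℕ) (hN : 0 < N) (f : Ωw → ℕ) (hf : Measurable f)
    (hunif : ∀ i < N, Pw {ω | f ω = i} = 1 / N) (k : ℕ) :
    Pw {ω | f ω = k} = if k < N then (1 : ℝ≥0∞) / N else 0 := by
  by_cases hk : k < N
  · rw [if_pos hk]; exact hunif k hk
  rw [if_neg hk]
  have hmeas : ∀ i : ℕ, MeasurableSet {ω | f ω = i} := fun i => hf (measurableSet_singleton i)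
  have hdisj' : ∀ i j : ℕ, i ≠ j → Disjoint {ω | f ω = i} {ω | f ω = j} := by
    intro i j hij
    rw [Set.disjoint_left]
    rintro ω (h1 : f ω = i) (h2 : f ω = j)
    exact hij (h1 ▸ h2 ▸ rfl)
  have hU : Pw (⋃ i ∈ Finset.range N, {ω | f ω = i}) = 1 := by
    rw [measure_biUnion_finset ?_ (fun i _ => hmeas i)]
    · rw [Finset.sum_congr rfl (fun i hi => hunif i (Finset.mem_range.mp hi)),
        Finset.sum_const, Finset.card_range, nsmul_eq_mul, ENNReal.mul_div_cancel]
      · exact_mod_cast Nat.cast_ne_zero.mpr hN.ne'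
      · exact ENNReal.natCast_ne_top N
    · intro i hi j hj hij
      exact hdisj' i j hij
  have hdisj2 : Disjoint {ω | f ω = k} (⋃ i ∈ Finset.range N, {ω | f ω = i}) := by
    rw [Set.disjoint_right]
    intro ω hω
    simp only [Set.mem_iUnion, Finset.mem_range] at hω
    obtain ⟨i, hi, hωi⟩ := hω
    intro (hωk : f ω = k)
    exact hk (hωk ▸ hωi ▸ hi)
  have hUmeas : MeasurableSet (⋃ i ∈ Finset.range N, {ω | f ω = i}) :=
    MeasurableSet.biUnion (Finset.countable_toSet _) (fun i _ => hmeas i)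
  have hle : Pw {ω | f ω = k} + 1 ≤ 1 := by
    calc Pw {ω | f ω = k} + 1 = Pw {ω | f ω = k} + Pw (⋃ i ∈ Finset.range N, {ω | f ω = i}) := by
          rw [hU]
      _ = Pw ({ω | f ω = k} ∪ ⋃ i ∈ Finset.range N, {ω | f ω = i}) :=
          (measure_union hdisj2 hUmeas).symm
      _ ≤ 1 := prob_le_one
  have h0 : Pw {ω | f ω = k} + 1 ≤ 0 + 1 := by simpa using hle
  have := ENNReal.le_of_add_le_add_right ENNReal.one_ne_top h0
  exact le_antisymm this zero_le

lemma s18sum (N : ℕ) (x y : ℝ) :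
    ∑ i ∈ Finset.range N, ∑ j ∈ Finset.range N, (if i = j then x else y)
      = N * x + ((N : ℝ) ^ 2 - N) * y := by
  have hin : ∀ i ∈ Finset.range N,
      ∑ j ∈ Finset.range N, (if i = j then x else y) = y * N + (x - y) := by
    intro i hi
    have h : ∀ j, (if i = j then x else y) = y + (if i = j then x - y else 0) := by
      intro j; split <;> ring
    rw [Finset.sum_congr rfl fun j _ => h j, Finset.sum_add_distrib, Finset.sum_const,
      Finset.card_range, Finset.sum_ite_eq, if_pos hi, nsmul_eq_mul]
    ring
  rw [Finset.sum_congr rfl hin, Finset.sum_const, Finset.card_range, nsmul_eq_mul]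
  ring

lemma s18main {Ωw : Type*} [MeasurableSpace Ωw] (Pw : Measure Ωw) [IsProbabilityMeasure Pw]
    (N M : ℕ) (hN : 0 < N) (hM : 0 < M)
    (Y : Ωw → Fin M → ℕ) (hYmeas : Measurable Y)
    (hYlaw : ∀ z : Fin M → ℕ,
      Pw {ω | Y ω = z} = ∏ s : Fin M, (if z s < N then (1 : ℝ≥0∞) / N else 0)) :
    ∃ β α : ℝ, 0 ≤ β ∧ (N : ℝ) * β ≤ 1 ∧ (N : ℝ) * β + ((N : ℝ) ^ 2 - N) * α = 0 ∧
      ∀ i ∈ Finset.range N, ∀ j ∈ Finset.range N,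
        ∫ ω, s18h N i (Y ω) * s18h N j (Y ω) ∂Pw = if i = j then β else α := by
  classical
  set U : ℕ → Ωw → ℝ := fun i ω => s18h N i (Y ω) with hU
  have hUmeas : ∀ i, Measurable (U i) := fun i => (s18h_measurable N M i).comp hYmeas
  have hint : ∀ i j, i < N → j < N → Integrable (fun ω => U i ω * U j ω) Pw := by
    intro i j hi hj
    refine Integrable.mono' (integrable_const 1)
      ((hUmeas i).mul (hUmeas j)).aestronglyMeasurable ?_
    filter_upwards with ω
    rw [Real.norm_eq_abs, abs_mul]
    exact mul_le_one₀ (s18h_abs_le i hi (Y ω)) (abs_nonneg _) (s18h_abs_le j hj (Y ω))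
  have hae : ∀ᵐ ω ∂Pw, ∀ s, Y ω s < N := by
    rw [ae_iff]
    have hsub : {ω | ¬ ∀ s, Y ω s < N}
        ⊆ ⋃ (z : {z : Fin M → ℕ // ¬ ∀ s, z s < N}), {ω | Y ω = z.1} := by
      intro ω hω; exact Set.mem_iUnion.mpr ⟨⟨Y ω, hω⟩, rfl⟩
    refine measure_mono_null hsub (measure_iUnion_null fun z => ?_)
    rw [hYlaw]
    obtain ⟨s, hs⟩ := not_forall.mp z.2
    exact Finset.prod_eq_zero (Finset.mem_univ s) (if_neg hs)
  have haesum : ∀ᵐ ω ∂Pw, ∑ i ∈ Finset.range N, U i ω = 0 := by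
    filter_upwards [hae] with ω hω
    exact s18h_sum N hN hM (Y ω) hω
  have hexch : ∀ (τ : Equiv.Perm ℕ), (∀ k, k < N ↔ τ k < N) → ∀ i j,
      ∫ ω, U (τ i) ω * U (τ j) ω ∂Pw = ∫ ω, U i ω * U j ω ∂Pw := by
    intro τ hτ i j
    have hτs : Measurable (τ.symm : ℕ → ℕ) := measurable_of_countable _
    have hY'meas : Measurable (fun ω => fun s => τ.symm (Y ω s)) :=
      measurable_pi_lambda _ fun s => hτs.comp ((measurable_pi_apply s).comp hYmeas)
    have hid : IdentDistrib (fun ω => fun s => τ.symm (Y ω s)) Y Pw Pw := by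
      refine ⟨hY'meas.aemeasurable, hYmeas.aemeasurable, ?_⟩
      refine Measure.ext_of_singleton fun z => ?_
      rw [Measure.map_apply hY'meas (measurableSet_singleton z),
        Measure.map_apply hYmeas (measurableSet_singleton z)]
      have h1 : (fun ω => fun s => τ.symm (Y ω s)) ⁻¹' {z}
          = {ω | Y ω = fun s => τ (z s)} := by
        ext ω
        simp only [Set.mem_preimage, Set.mem_singleton_iff, funext_iff, Set.mem_setOf_eq]
        constructor
        · intro h s; have hh := h s; rwa [Equiv.symm_apply_eq] at hh
        · intro h s; rw [h s]; exact Equiv.symm_apply_apply τ _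
      have h2 : Y ⁻¹' {z} = {ω | Y ω = z} := rfl
      rw [h1, h2, hYlaw, hYlaw]
      refine Finset.prod_congr rfl fun s _ => ?_
      by_cases h : z s < N
      · rw [if_pos h, if_pos ((hτ (z s)).mp h)]
      · rw [if_neg h, if_neg (fun hc => h ((hτ (z s)).mpr hc))]
    have hG : Measurable (fun z : Fin M → ℕ => s18h N i z * s18h N j z) :=
      measurable_of_countable _
    have heq := (hid.comp hG).integral_eq
    calc ∫ ω, U (τ i) ω * U (τ j) ω ∂Pw
        = ∫ ω, s18h N i (fun s => τ.symm (Y ω s)) * s18h N j (fun s => τ.symm (Y ω s)) ∂Pw := by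
          simp only [hU, s18h_perm N τ hτ]
      _ = ∫ ω, U i ω * U j ω ∂Pw := heq
  set e : ℕ → ℕ → ℝ := fun i j => ∫ ω, U i ω * U j ω ∂Pw with he
  have hβ0 : 0 ≤ e 0 0 := integral_nonneg fun ω => mul_self_nonneg _
  have hdiag : ∀ i, i < N → e i i = e 0 0 := by
    intro i hi
    have h := hexch (Equiv.swap 0 i) (s18swap_lt hN hi) 0 0
    rwa [Equiv.swap_apply_left] at h
  have key0 : ∑ i ∈ Finset.range N, ∑ j ∈ Finset.range N, e i j = 0 := by
    have h1 : ∀ i ∈ Finset.range N,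
        Integrable (fun ω => ∑ j ∈ Finset.range N, U i ω * U j ω) Pw :=
      fun i hi => integrable_finset_sum _ fun j hj =>
        hint i j (Finset.mem_range.mp hi) (Finset.mem_range.mp hj)
    calc ∑ i ∈ Finset.range N, ∑ j ∈ Finset.range N, e i j
        = ∫ ω, ∑ i ∈ Finset.range N, ∑ j ∈ Finset.range N, U i ω * U j ω ∂Pw := by
          rw [integral_finset_sum _ h1]
          exact Finset.sum_congr rfl fun i hi =>
            (integral_finset_sum _ fun j hj =>
              hint i j (Finset.mem_range.mp hi) (Finset.mem_range.mp hj)).symm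
      _ = 0 := by
          refine integral_eq_zero_of_ae ?_
          filter_upwards [haesum] with ω hω
          rw [← Finset.sum_mul_sum, hω, zero_mul]; rfl
  have key1 : (N : ℝ) * e 0 0 ≤ 1 := by
    have h2 : ∑ i ∈ Finset.range N, e i i = (N : ℝ) * e 0 0 := by
      rw [Finset.sum_congr rfl (fun i hi => hdiag i (Finset.mem_range.mp hi)),
        Finset.sum_const, Finset.card_range, nsmul_eq_mul]
    have h3 : ∑ i ∈ Finset.range N, e i i = ∫ ω, ∑ i ∈ Finset.range N, U i ω * U i ω ∂Pw :=
      (integral_finset_sum _ fun i hi =>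
        hint i i (Finset.mem_range.mp hi) (Finset.mem_range.mp hi)).symm
    have h4 : ∫ ω, ∑ i ∈ Finset.range N, U i ω * U i ω ∂Pw ≤ ∫ _, (1 : ℝ) ∂Pw := by
      refine integral_mono (integrable_finset_sum _ fun i hi =>
        hint i i (Finset.mem_range.mp hi) (Finset.mem_range.mp hi)) (integrable_const 1) ?_
      intro ω
      have hs := s18h_sq_sum N (Y ω)
      calc ∑ i ∈ Finset.range N, U i ω * U i ω = ∑ i ∈ Finset.range N, (s18h N i (Y ω)) ^ 2 := by
            exact Finset.sum_congr rfl fun i _ => (pow_two _).symm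
        _ ≤ 1 := hs
    have h5 : ∫ _, (1 : ℝ) ∂Pw = 1 := by simp
    rw [← h2]; rw [h3]; rw [← h5]; exact h4
  by_cases hN2 : 2 ≤ N
  · have h1N : 1 < N := hN2
    have hoff : ∀ i j, i < N → j < N → i ≠ j → e i j = e 0 1 := by
      intro i j hi hj hij
      set j₁ := Equiv.swap 0 i 1 with hj₁
      have hj₁N : j₁ < N := (s18swap_lt hN hi 1).mp h1N
      have hj₁i : j₁ ≠ i := by
        intro h
        have h0 : Equiv.swap 0 i 0 = i := Equiv.swap_apply_left 0 i
        have h1 := (Equiv.swap 0 i).injective (h.trans h0.symm)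
        exact one_ne_zero h1
      have hA : e i j₁ = e 0 1 := by
        have h := hexch (Equiv.swap 0 i) (s18swap_lt hN hi) 0 1
        rwa [Equiv.swap_apply_left] at h
      have hB : e i j = e i j₁ := by
        have h := hexch (Equiv.swap j₁ j) (s18swap_lt hj₁N hj) i j₁
        rwa [Equiv.swap_apply_left, Equiv.swap_apply_of_ne_of_ne hj₁i.symm hij] at h
      rw [hB, hA]
    have hite : ∀ i ∈ Finset.range N, ∀ j ∈ Finset.range N,
        e i j = if i = j then e 0 0 else e 0 1 := by
      intro i hi j hj
      by_cases h : i = j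
      · subst h; rw [if_pos rfl]; exact hdiag i (Finset.mem_range.mp hi)
      · rw [if_neg h]; exact hoff i j (Finset.mem_range.mp hi) (Finset.mem_range.mp hj) h
    refine ⟨e 0 0, e 0 1, hβ0, key1, ?_, hite⟩
    calc (N : ℝ) * e 0 0 + ((N : ℝ) ^ 2 - N) * e 0 1
        = ∑ i ∈ Finset.range N, ∑ j ∈ Finset.range N, (if i = j then e 0 0 else e 0 1) :=
          (s18sum N (e 0 0) (e 0 1)).symm
      _ = ∑ i ∈ Finset.range N, ∑ j ∈ Finset.range N, e i j :=
          Finset.sum_congr rfl fun i hi => Finset.sum_congr rfl fun j hj => (hite i hi j hj).symm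
      _ = 0 := key0
  · have hN1 : N = 1 := by omega
    subst hN1
    have hβz : e 0 0 = 0 := by simpa using key0
    refine ⟨e 0 0, 0, hβ0, key1, by simp [hβz], ?_⟩
    intro i hi j hj
    simp only [Finset.mem_range, Nat.lt_one_iff] at hi hj
    subst hi; subst hj
    simp
    rfl

lemma s18bd_int {Ωw : Type*} [MeasurableSpace Ωw] (Pw : Measure Ωw) [IsProbabilityMeasure Pw]
    {g : Ωw → ℝ} (hg : Measurable g) (c : ℝ) (hc : ∀ ω, |g ω| ≤ c) : Integrable g Pw :=
  Integrable.mono' (integrable_const c) hg.aestronglyMeasurable (Eventually.of_forall hc)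

lemma s18meas_bound {Ωw : Type*} [MeasurableSpace Ωw] (Pw : Measure Ωw) [IsProbabilityMeasure Pw]
    (N M : ℕ) (hN : 0 < N) (hM : 0 < M)
    (V : Bool × ℕ → Ωw → ℕ) (hVmeas : ∀ p, Measurable (V p))
    (hVindep : iIndepFun V Pw)
    (hVunif : ∀ p, ∀ i < N, Pw {ω | V p ω = i} = 1 / N)
    (f : Ωw → ℝ)
    (hf : ∀ ω, f ω = ∑ i ∈ Finset.range N,
        s18h N i (fun s : Fin M => V (true, s.val) ω) *
          s18h N i (fun s : Fin M => V (false, s.val) ω))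
    {ε : ℝ} (hε : 0 < ε) :
    Pw {x | ε ≤ dist (f x) 0} ≤ ENNReal.ofReal (3 / N / ε ^ 2) := by
  classical
  set Yt : Ωw → Fin M → ℕ := fun ω s => V (true, s.val) ω with hYt
  set Yf : Ωw → Fin M → ℕ := fun ω s => V (false, s.val) ω with hYf
  have hYmeas : ∀ b : Bool, Measurable (fun ω => fun s : Fin M => V (b, s.val) ω) :=
    fun b => measurable_pi_lambda _ fun s => hVmeas _
  have hq : ∀ p k, Pw {ω | V p ω = k} = if k < N then (1 : ℝ≥0∞) / N else 0 :=
    fun p k => s18marg Pw N hN (V p) (hVmeas p) (hVunif p) k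
  -- joint law of each batch
  have hYlaw : ∀ b : Bool, ∀ z : Fin M → ℕ,
      Pw {ω | (fun s : Fin M => V (b, s.val) ω) = z}
        = ∏ s : Fin M, (if z s < N then (1 : ℝ≥0∞) / N else 0) := by
    intro b z
    set z' : ℕ → ℕ := fun s => if h : s < M then z ⟨s, h⟩ else 0 with hz'
    set Sb : Finset (Bool × ℕ) := (Finset.range M).image (fun s => (b, s)) with hSb
    have hset : {ω | (fun s : Fin M => V (b, s.val) ω) = z}
        = ⋂ p ∈ Sb, V p ⁻¹' {z' p.2} := by
      ext ω
      simp only [Set.mem_setOf_eq, funext_iff, Set.mem_iInter, hSb, Finset.mem_image,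
        Finset.mem_range, Set.mem_preimage, Set.mem_singleton_iff]
      constructor
      · rintro h p ⟨s, hs, rfl⟩
        have hzz : z' s = z ⟨s, hs⟩ := dif_pos hs
        rw [hzz]
        exact h ⟨s, hs⟩
      · intro h s
        have hh := h (b, s.val) ⟨s.val, s.isLt, rfl⟩
        have hzz : z' s.val = z s := by
          rw [hz']; simp only [s.isLt, dif_pos]
        rwa [hzz] at hh
    rw [hset, hVindep.measure_inter_preimage_eq_mul Sb (fun p _ => measurableSet_singleton _)]
    rw [Finset.prod_image (by intro a _ c _ h; exact (Prod.mk.injEq _ _ _ _).mp h |>.2)]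
    rw [← Fin.prod_univ_eq_prod_range (fun s => Pw (V (b, s) ⁻¹' {z' s})) M]
    refine Finset.prod_congr rfl fun s _ => ?_
    have h1 : V (b, s.val) ⁻¹' {z' s.val} = {ω | V (b, s.val) ω = z' s.val} := rfl
    have hzz : z' s.val = z s := by rw [hz']; simp only [s.isLt, dif_pos]
    rw [h1, hq, hzz]
  obtain ⟨βt, αt, hβt0, hβtN, hidt, hitet⟩ :=
    s18main Pw N M hN hM Yt (hYmeas true) (hYlaw true)
  obtain ⟨βf, αf, hβf0, hβfN, hidf, hitef⟩ :=
    s18main Pw N M hN hM Yf (hYmeas false) (hYlaw false)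
  -- independence of the two batches
  set St : Finset (Bool × ℕ) := (Finset.range M).image (fun s => ((true : Bool), s)) with hSt
  set Sf : Finset (Bool × ℕ) := (Finset.range M).image (fun s => ((false : Bool), s)) with hSf
  have hSdisj : Disjoint St Sf := by
    rw [Finset.disjoint_left]
    rintro ⟨b, s⟩ hbt hbf
    rw [hSt, Finset.mem_image] at hbt
    rw [hSf, Finset.mem_image] at hbf
    obtain ⟨a1, _, h1⟩ := hbt
    obtain ⟨a2, _, h2⟩ := hbf
    have hbb : (true : Bool) = false := congrArg Prod.fst (h1.trans h2.symm)
    simp at hbb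
  have hindZ := hVindep.indepFun_finset St Sf hSdisj hVmeas
  have hmemt : ∀ s : Fin M, ((true : Bool), s.val) ∈ St :=
    fun s => Finset.mem_image.mpr ⟨s.val, Finset.mem_range.mpr s.isLt, rfl⟩
  have hmemf : ∀ s : Fin M, ((false : Bool), s.val) ∈ Sf :=
    fun s => Finset.mem_image.mpr ⟨s.val, Finset.mem_range.mpr s.isLt, rfl⟩
  have hindY : IndepFun Yt Yf Pw := by
    have hφt : Measurable (fun g : (p : St) → ℕ => fun s : Fin M => g ⟨(true, s.val), hmemt s⟩) :=
      measurable_pi_lambda _ fun s => measurable_pi_apply _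
    have hφf : Measurable (fun g : (p : Sf) → ℕ => fun s : Fin M => g ⟨(false, s.val), hmemf s⟩) :=
      measurable_pi_lambda _ fun s => measurable_pi_apply _
    exact hindZ.comp hφt hφf
  -- cross moments
  set Ut : ℕ → Ωw → ℝ := fun i ω => s18h N i (Yt ω) with hUt
  set Uf : ℕ → Ωw → ℝ := fun i ω => s18h N i (Yf ω) with hUf
  have hUtmeas : ∀ i, Measurable (Ut i) := fun i => (s18h_measurable N M i).comp (hYmeas true)
  have hUfmeas : ∀ i, Measurable (Uf i) := fun i => (s18h_measurable N M i).comp (hYmeas false)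
  have habt : ∀ i, i < N → ∀ ω, |Ut i ω| ≤ 1 := fun i hi ω => s18h_abs_le i hi _
  have habf : ∀ i, i < N → ∀ ω, |Uf i ω| ≤ 1 := fun i hi ω => s18h_abs_le i hi _
  have hint_t : ∀ i j, i < N → j < N → Integrable (fun ω => Ut i ω * Ut j ω) Pw := by
    intro i j hi hj
    refine s18bd_int Pw ((hUtmeas i).mul (hUtmeas j)) 1 fun ω => ?_
    rw [abs_mul]
    exact mul_le_one₀ (habt i hi ω) (abs_nonneg _) (habt j hj ω)
  have hint_f : ∀ i j, i < N → j < N → Integrable (fun ω => Uf i ω * Uf j ω) Pw := by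
    intro i j hi hj
    refine s18bd_int Pw ((hUfmeas i).mul (hUfmeas j)) 1 fun ω => ?_
    rw [abs_mul]
    exact mul_le_one₀ (habf i hi ω) (abs_nonneg _) (habf j hj ω)
  have hsplit : ∀ i j, i < N → j < N →
      ∫ ω, (Ut i ω * Ut j ω) * (Uf i ω * Uf j ω) ∂Pw
        = (∫ ω, Ut i ω * Ut j ω ∂Pw) * ∫ ω, Uf i ω * Uf j ω ∂Pw := by
    intro i j hi hj
    have hGt : Measurable (fun z : Fin M → ℕ => s18h N i z * s18h N j z) :=
      measurable_of_countable _
    have hGf : Measurable (fun z : Fin M → ℕ => s18h N i z * s18h N j z) :=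
      measurable_of_countable _
    have hind : IndepFun (fun ω => Ut i ω * Ut j ω) (fun ω => Uf i ω * Uf j ω) Pw :=
      hindY.comp hGt hGf
    exact hind.integral_mul_eq_mul_integral (hint_t i j hi hj).aestronglyMeasurable
      (hint_f i j hi hj).aestronglyMeasurable
  have hEf : ∫ ω, f ω ^ 2 ∂Pw = (N : ℝ) * (βt * βf) + ((N : ℝ) ^ 2 - N) * (αt * αf) := by
    have hfsq : (fun ω => f ω ^ 2) = fun ω => ∑ i ∈ Finset.range N, ∑ j ∈ Finset.range N,
        (Ut i ω * Ut j ω) * (Uf i ω * Uf j ω) := by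
      funext ω
      rw [hf, pow_two, Finset.sum_mul_sum]
      exact Finset.sum_congr rfl fun i _ => Finset.sum_congr rfl fun j _ => by ring
    have hterm : ∀ i j, i < N → j < N →
        Integrable (fun ω => (Ut i ω * Ut j ω) * (Uf i ω * Uf j ω)) Pw := by
      intro i j hi hj
      refine s18bd_int Pw (((hUtmeas i).mul (hUtmeas j)).mul ((hUfmeas i).mul (hUfmeas j))) 1
        fun ω => ?_
      rw [abs_mul, abs_mul, abs_mul]
      exact mul_le_one₀ (mul_le_one₀ (habt i hi ω) (abs_nonneg _) (habt j hj ω))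
        (by positivity) (mul_le_one₀ (habf i hi ω) (abs_nonneg _) (habf j hj ω))
    calc ∫ ω, f ω ^ 2 ∂Pw
        = ∑ i ∈ Finset.range N, ∑ j ∈ Finset.range N,
            ∫ ω, (Ut i ω * Ut j ω) * (Uf i ω * Uf j ω) ∂Pw := by
          rw [hfsq, integral_finset_sum _ (fun i hi => integrable_finset_sum _ fun j hj =>
            hterm i j (Finset.mem_range.mp hi) (Finset.mem_range.mp hj))]
          exact Finset.sum_congr rfl fun i hi => integral_finset_sum _ fun j hj =>
            hterm i j (Finset.mem_range.mp hi) (Finset.mem_range.mp hj)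
      _ = ∑ i ∈ Finset.range N, ∑ j ∈ Finset.range N,
            (if i = j then βt * βf else αt * αf) := by
          refine Finset.sum_congr rfl fun i hi => Finset.sum_congr rfl fun j hj => ?_
          rw [hsplit i j (Finset.mem_range.mp hi) (Finset.mem_range.mp hj),
            hitet i hi j hj, hitef i hi j hj]
          by_cases h : i = j
          · simp [h]
          · simp [h]
      _ = (N : ℝ) * (βt * βf) + ((N : ℝ) ^ 2 - N) * (αt * αf) := s18sum N _ _
  have hNR : (0 : ℝ) < N := by exact_mod_cast hN
  have hle : ∫ ω, f ω ^ 2 ∂Pw ≤ 3 / N := by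
    rw [hEf]
    by_cases hN2 : 2 ≤ N
    · have hNR2 : (2 : ℝ) ≤ N := by exact_mod_cast hN2
      have hP : (0 : ℝ) < (N : ℝ) ^ 2 - N := by nlinarith
      set P : ℝ := (N : ℝ) ^ 2 - N with hPdef
      have hat : αt = -((N : ℝ) * βt) / P := by
        field_simp
        linarith [hidt]
      have haf : αf = -((N : ℝ) * βf) / P := by
        field_simp
        linarith [hidf]
      have h1 : (N : ℝ) * (βt * βf) = ((N : ℝ) * βt) * ((N : ℝ) * βf) / N := by
        field_simp
      have h2 : P * (αt * αf) = ((N : ℝ) * βt) * ((N : ℝ) * βf) / P := by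
        rw [hat, haf]; field_simp
      have hAB : 0 ≤ ((N : ℝ) * βt) * ((N : ℝ) * βf) :=
        mul_nonneg (by positivity) (by positivity)
      have hAB1 : ((N : ℝ) * βt) * ((N : ℝ) * βf) ≤ 1 := by
        calc ((N : ℝ) * βt) * ((N : ℝ) * βf) ≤ 1 * 1 :=
              mul_le_mul hβtN hβfN (by positivity) (by linarith)
          _ = 1 := by ring
      have hPN : 1 / P ≤ 2 / N := by
        rw [div_le_div_iff₀ hP hNR]
        nlinarith
      calc (N : ℝ) * (βt * βf) + P * (αt * αf)
          = ((N : ℝ) * βt) * ((N : ℝ) * βf) / N + ((N : ℝ) * βt) * ((N : ℝ) * βf) / P := by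
            rw [h1, h2]
        _ ≤ 1 / N + 1 / P := by
            gcongr
        _ ≤ 1 / N + 2 / N := by linarith
        _ = 3 / N := by ring
    · have hN1 : N = 1 := by omega
      subst hN1
      have hz : βt = 0 := by
        have := hidt
        norm_num at this
        linarith
      rw [hz]
      norm_num
  -- Markov
  have hmeasf : Measurable f := by
    have : f = fun ω => ∑ i ∈ Finset.range N, Ut i ω * Uf i ω := funext hf
    rw [this]
    exact Finset.measurable_sum _ fun i _ => (hUtmeas i).mul (hUfmeas i)
  have habsf : ∀ ω, |f ω| ≤ N := by
    intro ω
    rw [hf]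
    calc |∑ i ∈ Finset.range N, Ut i ω * Uf i ω| ≤ ∑ i ∈ Finset.range N, |Ut i ω * Uf i ω| :=
          Finset.abs_sum_le_sum_abs _ _
      _ ≤ ∑ i ∈ Finset.range N, 1 := Finset.sum_le_sum fun i hi => by
          rw [abs_mul]
          exact mul_le_one₀ (habt i (Finset.mem_range.mp hi) ω) (abs_nonneg _)
            (habf i (Finset.mem_range.mp hi) ω)
      _ = N := by simp
  have hint2 : Integrable (fun ω => f ω ^ 2) Pw := by
    refine s18bd_int Pw (hmeasf.pow_const 2) ((N : ℝ) ^ 2) fun ω => ?_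
    rw [abs_pow]
    exact pow_le_pow_left₀ (abs_nonneg _) (habsf ω) 2
  have hsetEq : {x | ε ≤ dist (f x) 0} = {x | ε ^ 2 ≤ f x ^ 2} := by
    ext x
    simp only [Real.dist_0_eq_abs, Set.mem_setOf_eq]
    constructor
    · intro h
      calc ε ^ 2 ≤ |f x| ^ 2 := pow_le_pow_left₀ hε.le h 2
        _ = f x ^ 2 := sq_abs _
    · intro h
      by_contra hc
      push_neg at hc
      have h2 : f x ^ 2 < ε ^ 2 := by
        rw [← sq_abs]
        exact pow_lt_pow_left₀ hc (abs_nonneg _) two_ne_zero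
      linarith
  have hmar := mul_meas_ge_le_integral_of_nonneg (μ := Pw) (f := fun ω => f ω ^ 2)
    (Eventually.of_forall fun ω => sq_nonneg _) hint2 (ε ^ 2)
  have hεsq : (0 : ℝ) < ε ^ 2 := by positivity
  have h1 : (Pw {x | ε ≤ dist (f x) 0}).toReal ≤ 3 / N / ε ^ 2 := by
    rw [hsetEq, le_div_iff₀ hεsq, mul_comm]
    exact hmar.trans hle
  calc Pw {x | ε ≤ dist (f x) 0}
      = ENNReal.ofReal ((Pw {x | ε ≤ dist (f x) 0}).toReal) :=
        (ENNReal.ofReal_toReal (measure_ne_top _ _)).symm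
    _ ≤ ENNReal.ofReal (3 / N / ε ^ 2) := ENNReal.ofReal_le_ofReal h1

lemma s18_prod_integral {Ωx : Type*} [MeasurableSpace Ωx] (Px : Measure Ωx)
    [IsProbabilityMeasure Px] (X : ℕ → Ωx → ℝ) (σ : ℝ)
    (hXmeas : ∀ i, Measurable (X i))
    (hXindep : iIndepFun X Px)
    (hXid : ∀ i, IdentDistrib (X i) (X 0) Px Px)
    (hmean : ∫ ω, X 0 ω ∂Px = 0)
    (hvar : ∫ ω, (X 0 ω) ^ 2 ∂Px = σ ^ 2)
    (hL2 : Integrable (fun ω => (X 0 ω) ^ 2) Px)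
    (n : ℕ) (a b : ℕ → ℝ) :
    ∫ ωx, (∑ i ∈ range n, a i * X i ωx) * (∑ j ∈ range n, b j * X j ωx) ∂Px
      = σ ^ 2 * ∑ i ∈ range n, a i * b i := by
  have hL2' : ∀ i, MemLp (X i) 2 Px := by
    intro i
    rw [memLp_two_iff_integrable_sq (hXmeas i).aestronglyMeasurable]
    have h2 : IdentDistrib (fun ω => (X i ω) ^ 2) (fun ω => (X 0 ω) ^ 2) Px Px :=
      (hXid i).comp (measurable_id.pow_const 2)
    exact h2.integrable_iff.mpr hL2
  have hXint : ∀ i, Integrable (X i) Px := fun i => (hL2' i).integrable one_le_two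
  have hint : ∀ i j, Integrable (fun ω => X i ω * X j ω) Px := by
    intro i j
    have h := ((hL2' j).smul (hL2' i) (r := 1) : MemLp ((X i) • (X j)) 1 Px)
    exact memLp_one_iff_integrable.mp h
  have hXmean : ∀ i, ∫ ω, X i ω ∂Px = 0 := fun i => ((hXid i).integral_eq).trans hmean
  have hXX : ∀ i j, i ≠ j → ∫ ω, X i ω * X j ω ∂Px = 0 := by
    intro i j hij
    have h := (hXindep.indepFun hij).integral_mul_eq_mul_integral (hXint i).aestronglyMeasurable
      (hXint j).aestronglyMeasurable
    have h' : ∫ ω, X i ω * X j ω ∂Px = (∫ ω, X i ω ∂Px) * ∫ ω, X j ω ∂Px := h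
    rw [h', hXmean i, hXmean j, mul_zero]
  have hXsq : ∀ i, ∫ ω, X i ω * X i ω ∂Px = σ ^ 2 := by
    intro i
    have h2 : IdentDistrib (fun ω => (X i ω) ^ 2) (fun ω => (X 0 ω) ^ 2) Px Px :=
      (hXid i).comp (measurable_id.pow_const 2)
    have := h2.integral_eq.trans hvar
    simpa [pow_two] using this
  calc ∫ ωx, (∑ i ∈ range n, a i * X i ωx) * (∑ j ∈ range n, b j * X j ωx) ∂Px
      = ∫ ωx, ∑ i ∈ range n, ∑ j ∈ range n, (a i * b j) * (X i ωx * X j ωx) ∂Px := by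
        congr 1; funext ωx
        rw [Finset.sum_mul_sum]
        exact Finset.sum_congr rfl fun i _ => Finset.sum_congr rfl fun j _ => by ring
    _ = ∑ i ∈ range n, ∑ j ∈ range n, (a i * b j) * ∫ ωx, X i ωx * X j ωx ∂Px := by
        rw [integral_finset_sum _ (fun i _ => integrable_finset_sum _
          (fun j _ => ((hint i j).const_mul _)))]
        exact Finset.sum_congr rfl fun i _ => by
          rw [integral_finset_sum _ (fun j _ => ((hint i j).const_mul _))]
          exact Finset.sum_congr rfl fun j _ => integral_const_mul _ _
    _ = ∑ i ∈ range n, (a i * b i) * σ ^ 2 := by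
        refine Finset.sum_congr rfl fun i hi => ?_
        rw [Finset.sum_eq_single_of_mem i hi]
        · rw [hXsq i]
        · intro j _ hj
          rw [hXX i j (fun h => hj (h.symm)), mul_zero]
    _ = σ ^ 2 * ∑ i ∈ range n, a i * b i := by rw [Finset.mul_sum]; exact Finset.sum_congr rfl fun i _ => by ring

/-- For i.i.d. data `X₁,…,Xₙ` (mean `0`, variance `σ²`) on `Ωx` and two
independent Multinomial(m_n; 1/n,…,1/n) weight vectors `w(b) = w n true`, `w(b') = w n false`
on `Ωw` (realized as category counts of two independent batches of `m_n` i.i.d. uniform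
draws `Z n (b, ·)`), the conditional expectation of `T(b)·T(b')` given the weights (i.e. the
integral over the data for fixed weight point) equals
`∑ᵢ cᵢ(b)cᵢ(b') / (√(∑ c(b)²) √(∑ c(b')²))` where `cᵢ(b) = wᵢ(b)/m_n − 1/n`,
and this quantity tends to `0` in probability (w.r.t. the law of the weights)
as `n, m_n → ∞` with `m_n = o(n²)`. -/
theorem stmt18
    {Ωx Ωw : Type*} [MeasurableSpace Ωx] [MeasurableSpace Ωw]
    (Px : Measure Ωx) [IsProbabilityMeasure Px]
    (Pw : Measure Ωw) [IsProbabilityMeasure Pw]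
    (X : ℕ → Ωx → ℝ) (σ : ℝ) (hσ : 0 < σ)
    (hXmeas : ∀ i, Measurable (X i))
    (hXindep : iIndepFun X Px)
    (hXid : ∀ i, IdentDistrib (X i) (X 0) Px Px)
    (hmean : ∫ ω, X 0 ω ∂Px = 0)
    (hvar : ∫ ω, (X 0 ω) ^ 2 ∂Px = σ ^ 2)
    (hL2 : Integrable (fun ω => (X 0 ω) ^ 2) Px)
    (m : ℕ → ℕ) (Z : (n : ℕ) → Bool × ℕ → Ωw → ℕ) (w : ℕ → Bool → ℕ → Ωw → ℕ)
    (hZmeas : ∀ n p, Measurable (Z n p))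
    (hZindep : ∀ n, iIndepFun (Z n) Pw)
    (hZunif : ∀ n p, ∀ i < n, Pw {ω | Z n p ω = i} = 1 / n)
    (hw : ∀ n b i ω,
      w n b i ω = ((Finset.range (m n)).filter (fun s => Z n (b, s) ω = i)).card)
    (hm : Tendsto m atTop atTop)
    (hmn : Tendsto (fun n => (m n : ℝ) / (n : ℝ) ^ 2) atTop (nhds 0)) :
    (∀ n : ℕ, ∀ ωw : Ωw,
      0 < ∑ k ∈ Finset.range n, ((w n true k ωw : ℝ) / (m n) - 1 / n) ^ 2 →
      0 < ∑ l ∈ Finset.range n, ((w n false l ωw : ℝ) / (m n) - 1 / n) ^ 2 →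
      ∫ ωx,
          ((∑ i ∈ Finset.range n, ((w n true i ωw : ℝ) / (m n) - 1 / n) * X i ωx) /
              (σ * Real.sqrt
                (∑ k ∈ Finset.range n, ((w n true k ωw : ℝ) / (m n) - 1 / n) ^ 2))) *
            ((∑ j ∈ Finset.range n, ((w n false j ωw : ℝ) / (m n) - 1 / n) * X j ωx) /
              (σ * Real.sqrt
                (∑ l ∈ Finset.range n, ((w n false l ωw : ℝ) / (m n) - 1 / n) ^ 2))) ∂Px
        = (∑ i ∈ Finset.range n,
              ((w n true i ωw : ℝ) / (m n) - 1 / n) * ((w n false i ωw : ℝ) / (m n) - 1 / n)) /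
            (Real.sqrt (∑ k ∈ Finset.range n, ((w n true k ωw : ℝ) / (m n) - 1 / n) ^ 2) *
              Real.sqrt (∑ l ∈ Finset.range n, ((w n false l ωw : ℝ) / (m n) - 1 / n) ^ 2)))
    ∧
    TendstoInMeasure Pw
      (fun n ωw =>
        (∑ i ∈ Finset.range (n + 1),
            ((w (n + 1) true i ωw : ℝ) / (m (n + 1)) - 1 / (n + 1)) *
              ((w (n + 1) false i ωw : ℝ) / (m (n + 1)) - 1 / (n + 1))) /
          (Real.sqrt (∑ k ∈ Finset.range (n + 1),
              ((w (n + 1) true k ωw : ℝ) / (m (n + 1)) - 1 / (n + 1)) ^ 2) *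
            Real.sqrt (∑ l ∈ Finset.range (n + 1),
              ((w (n + 1) false l ωw : ℝ) / (m (n + 1)) - 1 / (n + 1)) ^ 2)))
      atTop (fun _ => 0) := by
  classical
  constructor
  · intro n ωw hA hB
    have key : ∫ ωx,
        (∑ i ∈ Finset.range n, ((w n true i ωw : ℝ) / (m n) - 1 / n) * X i ωx) *
          (∑ j ∈ Finset.range n, ((w n false j ωw : ℝ) / (m n) - 1 / n) * X j ωx) ∂Px
        = σ ^ 2 * ∑ i ∈ Finset.range n,
            ((w n true i ωw : ℝ) / (m n) - 1 / n) * ((w n false i ωw : ℝ) / (m n) - 1 / n) :=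
      s18_prod_integral Px X σ hXmeas hXindep hXid hmean hvar hL2 n
        (fun i => (w n true i ωw : ℝ) / (m n) - 1 / n)
        (fun i => (w n false i ωw : ℝ) / (m n) - 1 / n)
    simp only [div_mul_div_comm]
    rw [integral_div, key]
    rw [show (σ * Real.sqrt (∑ k ∈ Finset.range n, ((w n true k ωw : ℝ) / (m n) - 1 / n) ^ 2)) *
        (σ * Real.sqrt (∑ l ∈ Finset.range n, ((w n false l ωw : ℝ) / (m n) - 1 / n) ^ 2))
        = σ ^ 2 * (Real.sqrt (∑ k ∈ Finset.range n, ((w n true k ωw : ℝ) / (m n) - 1 / n) ^ 2) *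
            Real.sqrt (∑ l ∈ Finset.range n, ((w n false l ωw : ℝ) / (m n) - 1 / n) ^ 2))
      from by ring]
    exact mul_div_mul_left _ _ (pow_ne_zero 2 hσ.ne')
  · rw [tendstoInMeasure_iff_dist]
    refine fun ε hε => ?_
    have hMev : ∀ᶠ n in atTop, 0 < m (n + 1) :=
      (hm.comp (tendsto_add_atTop_nat 1)).eventually_gt_atTop 0
    have hbound : ∀ᶠ n in atTop,
        Pw {x | ε ≤ dist
          ((∑ i ∈ Finset.range (n + 1),
              ((w (n + 1) true i x : ℝ) / (m (n + 1)) - 1 / (n + 1)) *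
                ((w (n + 1) false i x : ℝ) / (m (n + 1)) - 1 / (n + 1))) /
            (Real.sqrt (∑ k ∈ Finset.range (n + 1),
                ((w (n + 1) true k x : ℝ) / (m (n + 1)) - 1 / (n + 1)) ^ 2) *
              Real.sqrt (∑ l ∈ Finset.range (n + 1),
                ((w (n + 1) false l x : ℝ) / (m (n + 1)) - 1 / (n + 1)) ^ 2))) 0}
          ≤ ENNReal.ofReal (3 / ((n : ℝ) + 1) / ε ^ 2) := by
      filter_upwards [hMev] with n hMpos
      have hfeq : ∀ ωw : Ωw,
          (∑ i ∈ Finset.range (n + 1),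
              ((w (n + 1) true i ωw : ℝ) / (m (n + 1)) - 1 / (n + 1)) *
                ((w (n + 1) false i ωw : ℝ) / (m (n + 1)) - 1 / (n + 1))) /
            (Real.sqrt (∑ k ∈ Finset.range (n + 1),
                ((w (n + 1) true k ωw : ℝ) / (m (n + 1)) - 1 / (n + 1)) ^ 2) *
              Real.sqrt (∑ l ∈ Finset.range (n + 1),
                ((w (n + 1) false l ωw : ℝ) / (m (n + 1)) - 1 / (n + 1)) ^ 2))
          = ∑ i ∈ Finset.range (n + 1),
              s18h (n + 1) i (fun s : Fin (m (n + 1)) => Z (n + 1) (true, s.val) ωw) *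
                s18h (n + 1) i (fun s : Fin (m (n + 1)) => Z (n + 1) (false, s.val) ωw) := by
        intro ωw
        have hwc : ∀ (b : Bool) (i : ℕ),
            (w (n + 1) b i ωw : ℝ)
              = ((s18cnt (fun s : Fin (m (n + 1)) => Z (n + 1) (b, s.val) ωw) i : ℕ) : ℝ) := by
          intro b i
          rw [hw]
          norm_cast
          exact s18card (m (n + 1)) (fun s => Z (n + 1) (b, s) ωw = i)
        have hterm : ∀ (b : Bool) (k : ℕ),
            ((w (n + 1) b k ωw : ℝ) / (m (n + 1)) - 1 / ((n : ℝ) + 1))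
              = ((s18cnt (fun s : Fin (m (n + 1)) => Z (n + 1) (b, s.val) ωw) k : ℕ) : ℝ)
                  / ((m (n + 1) : ℕ) : ℝ) - 1 / (((n + 1 : ℕ) : ℝ)) := by
          intro b k
          rw [hwc b k]
          push_cast
          ring
        rw [Finset.sum_div]
        refine Finset.sum_congr rfl fun i hi => ?_
        rw [← div_mul_div_comm]
        simp only [hterm]
        rfl
      have h := s18meas_bound Pw (n + 1) (m (n + 1)) n.succ_pos hMpos (Z (n + 1))
        (hZmeas (n + 1)) (hZindep (n + 1)) (fun p i hi => hZunif (n + 1) p i hi)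
        _ hfeq hε
      rwa [Nat.cast_add, Nat.cast_one] at h
    have hup : Tendsto (fun n : ℕ => ENNReal.ofReal (3 / ((n : ℝ) + 1) / ε ^ 2)) atTop (𝓝 0) := by
      have h1 : Tendsto (fun n : ℕ => ((n : ℝ) + 1)) atTop atTop :=
        tendsto_atTop_add_const_right _ 1 tendsto_natCast_atTop_atTop
      have h0 : Tendsto (fun n : ℕ => 3 / ((n : ℝ) + 1) / ε ^ 2) atTop (𝓝 0) := by
        have h2 : Tendsto (fun n : ℕ => 3 / ((n : ℝ) + 1)) atTop (𝓝 0) :=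
          tendsto_const_nhds.div_atTop h1
        simpa using h2.div_const (ε ^ 2)
      rw [← ENNReal.ofReal_zero]
      exact (ENNReal.continuous_ofReal.tendsto 0).comp h0
    exact tendsto_of_tendsto_of_tendsto_of_le_of_le' tendsto_const_nhds hup
      (Eventually.of_forall fun n => zero_le) hbound
end
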